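/- Suppose random variables T, Y₀ ∈ {0,1} satisfy (1/γ)·P(T=1|Y₀=1,D=1,X=x) ≤ P(T=1|Y₀=0,D=1,X=x) ≤ γ·P(T=1|Y₀=1,D=1,X=x) for some γ ≥ 1. Then P(T=1|Y₀=1,D=1,X=x) ≤ P(T=1|D=1,X=x) / (P(Y₀=1|D=1,X=x) + (1/γ)(1 − P(Y₀=1|D=1,X=x))). -/

import Mathlib

/-!
Splitting `B = {D = 1, X = x}` along `Y₀` gives the law of total probability
`P(T | B) = p · q₁ + (1 - p) · q₀` with `p = P(Y₀ = 1 | B)` and `qᵢ = P(T | Y₀ = i, B)`.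
The lower sensitivity bound `q₀ ≥ q₁ / γ` then yields `P(T | B) ≥ q₁ · (p + (1 - p) / γ)`,
and the factor `p + (1 - p) / γ` is at least `1 / γ > 0`, so it can be divided out.
-/

open MeasureTheory

/-- Conditional probability `P(A | B) = P(A ∩ B) / P(B)` as a real number. -/
noncomputable def condP {Ω : Type*} [MeasurableSpace Ω] (μ : Measure Ω) (A B : Set Ω) : ℝ :=
  (μ (A ∩ B)).toReal / (μ B).toReal

open Set

section CondP

variable {Ω : Type*} [MeasurableSpace Ω] (μ : Measure Ω) {A B E : Set Ω}

lemma condP_nonneg : 0 ≤ condP μ A B :=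
  div_nonneg ENNReal.toReal_nonneg ENNReal.toReal_nonneg

lemma condP_le_one [IsFiniteMeasure μ] : condP μ A B ≤ 1 :=
  div_le_one_of_le₀ (ENNReal.toReal_mono (measure_ne_top μ B) (measure_mono inter_subset_right))
    ENNReal.toReal_nonneg

lemma condP_mul_measure_toReal [IsFiniteMeasure μ] :
    condP μ A B * (μ B).toReal = (μ (A ∩ B)).toReal := by
  by_cases hB : μ B = 0
  · simp [hB, measure_mono_null inter_subset_right hB]
  · exact div_mul_cancel₀ _ (ENNReal.toReal_ne_zero.2 ⟨hB, measure_ne_top μ B⟩)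

lemma measure_toReal_inter_add_diff [IsFiniteMeasure μ] (S : Set Ω) (hE : MeasurableSet E) :
    (μ (S ∩ E)).toReal + (μ (S \ E)).toReal = (μ S).toReal := by
  rw [← ENNReal.toReal_add (measure_ne_top μ _) (measure_ne_top μ _), measure_inter_add_sdiff S hE]

lemma condP_eq_total [IsFiniteMeasure μ] (hE : MeasurableSet E) (hB : μ B ≠ 0) :
    condP μ A B = condP μ E B * condP μ A (E ∩ B) + (1 - condP μ E B) * condP μ A (B \ E) := by
  have hb : (μ B).toReal ≠ 0 := ENNReal.toReal_ne_zero.2 ⟨hB, measure_ne_top μ B⟩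
  have hcompl : 1 - condP μ E B = (μ (B \ E)).toReal / (μ B).toReal := by
    rw [condP, eq_div_iff hb, sub_mul, one_mul, div_mul_cancel₀ _ hb, inter_comm,
      ← measure_toReal_inter_add_diff μ B hE, add_sub_cancel_left]
  have hsplit := measure_toReal_inter_add_diff μ (A ∩ B) hE
  rw [inter_right_comm, inter_sdiff_assoc, inter_assoc] at hsplit
  calc condP μ A B = ((μ (A ∩ (E ∩ B))).toReal + (μ (A ∩ (B \ E))).toReal) / (μ B).toReal := by
        rw [hsplit, condP]
    _ = _ := by
        rw [← condP_mul_measure_toReal μ (B := E ∩ B), ← condP_mul_measure_toReal μ (B := B \ E),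
          hcompl, condP.eq_1 μ E B]
        ring

end CondP

lemma le_mix_div_of_mul_le {p c q₁ q₀ : ℝ} (hp₀ : 0 ≤ p) (hp₁ : p ≤ 1) (hc : 0 < c)
    (h : c * q₁ ≤ q₀) : q₁ ≤ (p * q₁ + (1 - p) * q₀) / (p + c * (1 - p)) := by
  have hden : 0 < p + c * (1 - p) := by
    rcases hp₀.eq_or_lt with rfl | hp
    · simpa using hc
    · nlinarith
  rw [le_div_iff₀ hden]
  nlinarith [mul_le_mul_of_nonneg_left h (sub_nonneg.2 hp₁)]

theorem sensitivity_upper_bound_general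
    {Ω ι : Type*} [MeasurableSpace Ω]
    (μ : Measure Ω) [IsProbabilityMeasure μ]
    (T Y0 D : Ω → ℕ) (X : Ω → ι) (x : ι) (γ : ℝ) (hγ : 1 ≤ γ)
    (hY0m : Measurable Y0)
    (hY0bin : ∀ ω, Y0 ω = 0 ∨ Y0 ω = 1)
    (hpos : 0 < μ ({ω | D ω = 1} ∩ {ω | X ω = x}))
    (hsensL : (1 / γ) *
        condP μ {ω | T ω = 1} ({ω | Y0 ω = 1} ∩ ({ω | D ω = 1} ∩ {ω | X ω = x})) ≤
      condP μ {ω | T ω = 1} ({ω | Y0 ω = 0} ∩ ({ω | D ω = 1} ∩ {ω | X ω = x}))) :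
    condP μ {ω | T ω = 1} ({ω | Y0 ω = 1} ∩ ({ω | D ω = 1} ∩ {ω | X ω = x})) ≤
      condP μ {ω | T ω = 1} ({ω | D ω = 1} ∩ {ω | X ω = x}) /
        (condP μ {ω | Y0 ω = 1} ({ω | D ω = 1} ∩ {ω | X ω = x}) +
          (1 / γ) * (1 - condP μ {ω | Y0 ω = 1} ({ω | D ω = 1} ∩ {ω | X ω = x}))) := by
  set B := {ω | D ω = 1} ∩ {ω | X ω = x}
  set E := {ω | Y0 ω = 1}
  have hE : MeasurableSet E := hY0m (measurableSet_singleton 1)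
  have hY0zero : {ω | Y0 ω = 0} ∩ B = B \ E := by
    ext ω
    rcases hY0bin ω with h | h <;> simp [E, h, and_comm]
  rw [hY0zero] at hsensL
  rw [condP_eq_total (A := {ω | T ω = 1}) μ hE hpos.ne']
  exact le_mix_div_of_mul_le (condP_nonneg μ) (condP_le_one μ) (by positivity) hsensL

/-- Sensitivity-model upper bound: under
`(1/γ)·P(T=1|Y₀=1,D=1,X=x) ≤ P(T=1|Y₀=0,D=1,X=x) ≤ γ·P(T=1|Y₀=1,D=1,X=x)` with `γ ≥ 1`,
`P(T=1|Y₀=1,D=1,X=x) ≤ P(T=1|D=1,X=x)/(P(Y₀=1|D=1,X=x) + (1/γ)(1 − P(Y₀=1|D=1,X=x)))`. -/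
theorem sensitivity_upper_bound
    {Ω ι : Type*} [MeasurableSpace Ω]
    (μ : Measure Ω) [IsProbabilityMeasure μ]
    (T Y0 D : Ω → ℕ) (X : Ω → ι) (x : ι) (γ : ℝ) (hγ : 1 ≤ γ)
    (hTm : Measurable T) (hY0m : Measurable Y0) (hDm : Measurable D)
    (hXx : MeasurableSet {ω | X ω = x})
    (hY0bin : ∀ ω, Y0 ω = 0 ∨ Y0 ω = 1)
    (hpos : 0 < μ ({ω | D ω = 1} ∩ {ω | X ω = x}))
    (hpos1 : 0 < μ ({ω | Y0 ω = 1} ∩ ({ω | D ω = 1} ∩ {ω | X ω = x})))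
    (hpos0 : 0 < μ ({ω | Y0 ω = 0} ∩ ({ω | D ω = 1} ∩ {ω | X ω = x})))
    (hsensL : (1 / γ) *
        condP μ {ω | T ω = 1} ({ω | Y0 ω = 1} ∩ ({ω | D ω = 1} ∩ {ω | X ω = x})) ≤
      condP μ {ω | T ω = 1} ({ω | Y0 ω = 0} ∩ ({ω | D ω = 1} ∩ {ω | X ω = x})))
    (hsensU : condP μ {ω | T ω = 1} ({ω | Y0 ω = 0} ∩ ({ω | D ω = 1} ∩ {ω | X ω = x})) ≤
      γ * condP μ {ω | T ω = 1} ({ω | Y0 ω = 1} ∩ ({ω | D ω = 1} ∩ {ω | X ω = x}))) :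
    condP μ {ω | T ω = 1} ({ω | Y0 ω = 1} ∩ ({ω | D ω = 1} ∩ {ω | X ω = x})) ≤
      condP μ {ω | T ω = 1} ({ω | D ω = 1} ∩ {ω | X ω = x}) /
        (condP μ {ω | Y0 ω = 1} ({ω | D ω = 1} ∩ {ω | X ω = x}) +
          (1 / γ) * (1 - condP μ {ω | Y0 ω = 1} ({ω | D ω = 1} ∩ {ω | X ω = x}))) :=
  sensitivity_upper_bound_general μ T Y0 D X x γ hγ hY0m hY0bin hpos hsensL
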